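/- arXiv:1002.0036 — 2 statements merged into one kernel-verified Lean document; each statement's English description precedes it below -/
import Mathlib

section
/- Discrete Intermediate Value Theorem: Let q, r ≥ 0. Let X ⊆ ℝ be discrete in ℝ such that any two adjacent points of X are at distance at most q, and let Y ⊆ ℝ be discrete in ℝ such that any two adjacent points of Y are at distance at least r. Let f : ℝ → ℝ satisfy f(X) ⊆ Y and be (q, r)-continuous inside X. If a, b ∈ X with a < b, then for every l ∈ Y with min(f(a), f(b)) ≤ l ≤ max(f(a), f(b)) there exists c ∈ X with a ≤ c ≤ b and f(c) = l. -/
/-- A set `X ⊆ ℝ` is discrete in `ℝ` if no sequence of pairwise distinct points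
of `X` converges to a real number. -/
def DiscreteInR (X : Set ℝ) : Prop :=
  ¬ ∃ (a : ℕ → ℝ) (c : ℝ), (∀ n, a n ∈ X) ∧ Function.Injective a ∧
      Filter.Tendsto a Filter.atTop (nhds c)

/-- Two points `u < v` of `X` are adjacent in `X` if no point of `X` lies
strictly between them. -/
def Adjacent (X : Set ℝ) (u v : ℝ) : Prop :=
  u ∈ X ∧ v ∈ X ∧ u < v ∧ ∀ z ∈ X, ¬ (u < z ∧ z < v)

/-- A function `f : ℝ → ℝ` is `(q, r)`-continuous inside a set `X ⊆ ℝ`. -/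
def QRContinuousInside (q r : ℝ) (f : ℝ → ℝ) (X : Set ℝ) : Prop :=
  ∀ p ∈ X, ∀ ε > 0, ∃ δ > 0, ∀ x ∈ X, |x - p| < q + δ → |f x - f p| < r + ε

lemma discrete_inter_Icc_finite {X : Set ℝ} (hX : DiscreteInR X) (a b : ℝ) :
    (X ∩ Set.Icc a b).Finite := by
  by_contra hinf
  have hinf' : (X ∩ Set.Icc a b).Infinite := hinf
  let u := hinf'.natEmbedding
  have hmemIcc : ∀ n, ((u n : ℝ)) ∈ Set.Icc a b := fun n => (u n).2.2
  obtain ⟨c, -, φ, hφ, htend⟩ :=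
    tendsto_subseq_of_bounded (Metric.isBounded_Icc a b) hmemIcc
  exact hX ⟨(fun n => (u n : ℝ)) ∘ φ, c,
    fun n => (u (φ n)).2.1,
    (Subtype.val_injective.comp u.injective).comp hφ.injective,
    htend⟩

lemma key (q r : ℝ) (hq : 0 ≤ q) (hr : 0 ≤ r)
    (X Y : Set ℝ) (hX : DiscreteInR X) (hY : DiscreteInR Y)
    (hXadj : ∀ u v : ℝ, Adjacent X u v → v - u ≤ q)
    (hYadj : ∀ u v : ℝ, Adjacent Y u v → r ≤ v - u)
    (f : ℝ → ℝ) (hfXY : ∀ x ∈ X, f x ∈ Y)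
    (hf : QRContinuousInside q r f X)
    (a b : ℝ) (haX : a ∈ X) (hbX : b ∈ X) (hab : a < b)
    (l : ℝ) (hlY : l ∈ Y)
    (hfa : f a ≤ l) (hfb : l ≤ f b) :
    ∃ c ∈ X, a ≤ c ∧ c ≤ b ∧ f c = l := by
  set S : Set ℝ := {x | x ∈ X ∧ a ≤ x ∧ x ≤ b ∧ f x ≤ l} with hS
  have hSfin : S.Finite := by
    apply (discrete_inter_Icc_finite hX a b).subset
    rintro x ⟨h1, h2, h3, -⟩; exact ⟨h1, h2, h3⟩
  have hSne : S.Nonempty := ⟨a, haX, le_refl a, hab.le, hfa⟩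
  set c := sSup S with hc
  have hcS : c ∈ S := hSne.csSup_mem hSfin
  obtain ⟨hcX, hac, hcb, hfc⟩ := hcS
  rcases eq_or_lt_of_le hfc with heq | hlt
  · exact ⟨c, hcX, hac, hcb, heq⟩
  -- f c < l, so c ≠ b
  have hcb' : c < b := by
    rcases eq_or_lt_of_le hcb with heq | h
    · exact absurd hfb (not_le.mpr (heq ▸ hlt))
    · exact h
  -- successor of c in X within (c, b]
  set T : Set ℝ := {x | x ∈ X ∧ c < x ∧ x ≤ b} with hT
  have hTfin : T.Finite := by
    apply (discrete_inter_Icc_finite hX a b).subset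
    rintro x ⟨h1, h2, h3⟩; exact ⟨h1, hac.trans h2.le, h3⟩
  have hTne : T.Nonempty := ⟨b, hbX, hcb', le_refl b⟩
  set c' := sInf T with hc'
  have hc'T : c' ∈ T := hTne.csInf_mem hTfin
  obtain ⟨hc'X, hcc', hc'b⟩ := hc'T
  have hadj : Adjacent X c c' := by
    refine ⟨hcX, hc'X, hcc', fun z hz ⟨h1, h2⟩ => ?_⟩
    have : z ∈ T := ⟨hz, h1, h2.le.trans hc'b⟩
    exact absurd (csInf_le hTfin.bddBelow this) (not_le.mpr h2)
  have hqgap : c' - c ≤ q := hXadj c c' hadj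
  -- f c' > l since c' ∉ S
  have hc'notS : c' ∉ S := fun hmem =>
    absurd (le_csSup hSfin.bddAbove hmem) (not_le.mpr hcc')
  have hfc' : l < f c' := by
    by_contra h
    exact hc'notS ⟨hc'X, hac.trans hcc'.le, hc'b, not_lt.mp h⟩
  -- |f c' - f c| ≤ r
  have hrgap : f c' - f c ≤ r := by
    have : ∀ ε > 0, f c' - f c < r + ε := by
      intro ε hε
      obtain ⟨δ, hδ, hδ'⟩ := hf c hcX ε hε
      have habs : |c' - c| < q + δ := by
        rw [abs_of_pos (by linarith)]; linarith
      have := hδ' c' hc'X habs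
      calc f c' - f c ≤ |f c' - f c| := le_abs_self _
        _ < r + ε := this
    by_contra h
    push_neg at h
    have := this ((f c' - f c - r) / 2) (by linarith)
    linarith
  -- Y gap argument
  have hYfc : f c ∈ Y := hfXY c hcX
  have hYfc' : f c' ∈ Y := hfXY c' hc'X
  set A : Set ℝ := {y | y ∈ Y ∧ f c ≤ y ∧ y < l} with hA
  have hAfin : A.Finite := by
    apply (discrete_inter_Icc_finite hY (f c) l).subset
    rintro y ⟨h1, h2, h3⟩; exact ⟨h1, h2, h3.le⟩
  have hAne : A.Nonempty := ⟨f c, hYfc, le_refl _, hlt⟩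
  set y := sSup A with hy
  have hyA : y ∈ A := hAne.csSup_mem hAfin
  obtain ⟨hyY, hfcy, hyl⟩ := hyA
  set B : Set ℝ := {z | z ∈ Y ∧ y < z ∧ z ≤ l} with hB
  have hBfin : B.Finite := by
    apply (discrete_inter_Icc_finite hY y l).subset
    rintro z ⟨h1, h2, h3⟩; exact ⟨h1, h2.le, h3⟩
  have hBne : B.Nonempty := ⟨l, hlY, hyl, le_refl _⟩
  set y' := sInf B with hy'
  have hy'B : y' ∈ B := hBne.csInf_mem hBfin
  obtain ⟨hy'Y, hyy', hy'l⟩ := hy'B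
  have hadjY : Adjacent Y y y' := by
    refine ⟨hyY, hy'Y, hyy', fun z hz ⟨h1, h2⟩ => ?_⟩
    have : z ∈ B := ⟨hz, h1, h2.le.trans hy'l⟩
    exact absurd (csInf_le hBfin.bddBelow this) (not_le.mpr h2)
  have := hYadj y y' hadjY
  linarith

/-- Discrete Intermediate Value Theorem. -/
theorem discrete_intermediate_value (q r : ℝ) (hq : 0 ≤ q) (hr : 0 ≤ r)
    (X Y : Set ℝ) (hX : DiscreteInR X) (hY : DiscreteInR Y)
    (hXadj : ∀ u v : ℝ, Adjacent X u v → v - u ≤ q)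
    (hYadj : ∀ u v : ℝ, Adjacent Y u v → r ≤ v - u)
    (f : ℝ → ℝ) (hfXY : ∀ x ∈ X, f x ∈ Y)
    (hf : QRContinuousInside q r f X)
    (a b : ℝ) (haX : a ∈ X) (hbX : b ∈ X) (hab : a < b)
    (l : ℝ) (hlY : l ∈ Y)
    (hl : min (f a) (f b) ≤ l ∧ l ≤ max (f a) (f b)) :
    ∃ c ∈ X, a ≤ c ∧ c ≤ b ∧ f c = l := by
  obtain ⟨hl1, hl2⟩ := hl
  rcases le_total (f a) (f b) with hfab | hfab
  · rw [min_eq_left hfab] at hl1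
    rw [max_eq_right hfab] at hl2
    exact key q r hq hr X Y hX hY hXadj hYadj f hfXY hf a b haX hbX hab l hlY hl1 hl2
  · rw [min_eq_right hfab] at hl1
    rw [max_eq_left hfab] at hl2
    -- use negation
    set Y' : Set ℝ := {y | -y ∈ Y} with hY'
    have hY'disc : DiscreteInR Y' := by
      rintro ⟨s, c, hmem, hinj, htend⟩
      exact hY ⟨fun n => -(s n), -c, hmem, fun m n h => hinj (neg_injective h),
        htend.neg⟩
    have hY'adj : ∀ u v : ℝ, Adjacent Y' u v → r ≤ v - u := by
      rintro u v ⟨hu, hv, huv, hbet⟩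
      have : Adjacent Y (-v) (-u) := by
        refine ⟨hv, by simpa [hY'] using hu, by linarith, fun z hz ⟨h1, h2⟩ => ?_⟩
        exact hbet (-z) (by simpa [hY'] using hz) ⟨by linarith, by linarith⟩
      have := hYadj _ _ this
      linarith
    have hf' : QRContinuousInside q r (fun x => -(f x)) X := by
      intro p hp ε hε
      obtain ⟨δ, hδ, hδ'⟩ := hf p hp ε hε
      refine ⟨δ, hδ, fun x hx hxp => ?_⟩
      have h2 := hδ' x hx hxp
      show |-(f x) - -(f p)| < r + ε
      rwa [show -(f x) - -(f p) = -(f x - f p) by ring, abs_neg]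
    have hfXY' : ∀ x ∈ X, (fun x => -(f x)) x ∈ Y' := by
      intro x hx; simpa [hY'] using hfXY x hx
    obtain ⟨c, hcX, h1, h2, h3⟩ := key q r hq hr X Y' hX hY'disc hXadj hY'adj
      (fun x => -(f x)) hfXY' hf' a b haX hbX hab (-l) (by simpa [hY'] using hlY)
      (by simpa using hl2) (by simpa using hl1)
    exact ⟨c, hcX, h1, h2, by linarith [neg_injective h3]⟩
end

section
/- Let q, r ≥ 0, let X ⊆ ℝ, and let f : ℝ → ℝ be strictly monotone (strictly increasing or strictly decreasing) on X. If every gap of X has length less than q and every gap of the image f(X) has length less than r, then f is r-continuous inside X. -/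
/-- Every gap of `S` has length less than `r`: whenever `c < d`, the open
interval `(c, d)` misses `S`, and `S` has points `≤ c` and `≥ d`, then
`d - c < r`. -/
def GapsLT (r : ℝ) (S : Set ℝ) : Prop :=
  ∀ c d : ℝ, c < d → Set.Ioo c d ∩ S = ∅ →
    (∃ p ∈ S, p ≤ c) → (∃ p' ∈ S, d ≤ p') → d - c < r

/-- A function `f : ℝ → ℝ` is `r`-continuous inside a set `X ⊆ ℝ`. -/
def RContinuousInside (r : ℝ) (f : ℝ → ℝ) (X : Set ℝ) : Prop :=
  ∀ p ∈ X, ∀ ε > 0, ∃ δ > 0, ∀ x ∈ X, |x - p| < δ → |f x - f p| < r + ε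

lemma gapsLT_neg {r : ℝ} {S : Set ℝ} (h : GapsLT r S) :
    GapsLT r ((fun y => -y) '' S) := by
  rintro c d hcd hdisj ⟨_, ⟨a, haS, rfl⟩, hpc⟩ ⟨_, ⟨b, hbS, rfl⟩, hp'⟩
  have h2 : Set.Ioo (-d) (-c) ∩ S = ∅ := by
    ext x
    simp only [Set.mem_inter_iff, Set.mem_Ioo, Set.mem_empty_iff_false, iff_false]
    rintro ⟨⟨h1x, h2x⟩, hxS⟩
    have : -x ∈ Set.Ioo c d ∩ ((fun y => -y) '' S) :=
      ⟨⟨by linarith, by linarith⟩, ⟨x, hxS, rfl⟩⟩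
    rw [hdisj] at this
    exact this
  have hpc' : -a ≤ c := hpc
  have hp'' : d ≤ -b := hp'
  have := h (-d) (-c) (by linarith) h2 ⟨b, hbS, by linarith⟩ ⟨a, haS, by linarith⟩
  linarith

lemma right_side (r ε : ℝ) (hr : 0 ≤ r) (hε : 0 < ε) (X : Set ℝ) (f : ℝ → ℝ)
    (hf : StrictMonoOn f X) (hg : GapsLT r (f '' X)) (p : ℝ) (hp : p ∈ X) :
    ∃ δ > 0, ∀ x ∈ X, p ≤ x → x - p < δ → f x - f p < r + ε := by
  by_cases h : ∃ x ∈ X, p < x ∧ f p + (r + ε) ≤ f x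
  · obtain ⟨x₁, hx₁X, hpx₁, hfx₁⟩ := h
    by_cases h2 : ∃ x₂ ∈ X, f p < f x₂ ∧ f x₂ < f p + (r + ε)
    · obtain ⟨x₂, hx₂X, h₂1, h₂2⟩ := h2
      have hpx₂ : p < x₂ := by
        by_contra hle
        push_neg at hle
        rcases eq_or_lt_of_le hle with he | hlt
        · rw [he] at h₂1; exact lt_irrefl _ h₂1
        · exact absurd (hf hx₂X hp hlt) (by linarith)
      refine ⟨x₂ - p, by linarith, ?_⟩
      intro x hxX hpx hxd
      rcases eq_or_lt_of_le hpx with he | hlt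
      · rw [← he]; linarith
      · have : f x < f x₂ := hf hxX hx₂X (by linarith)
        linarith
    · exfalso
      push_neg at h2
      have hdisj : Set.Ioo (f p) (f p + (r + ε)) ∩ (f '' X) = ∅ := by
        ext y
        simp only [Set.mem_inter_iff, Set.mem_Ioo, Set.mem_empty_iff_false, iff_false]
        rintro ⟨⟨hy1, hy2⟩, x, hxX, rfl⟩
        exact absurd hy2 (not_lt.mpr (h2 x hxX hy1))
      have := hg (f p) (f p + (r + ε)) (by linarith) hdisj
        ⟨f p, ⟨p, hp, rfl⟩, le_refl _⟩ ⟨f x₁, ⟨x₁, hx₁X, rfl⟩, hfx₁⟩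
      linarith
  · push_neg at h
    refine ⟨1, one_pos, ?_⟩
    intro x hxX hpx _
    rcases eq_or_lt_of_le hpx with he | hlt
    · rw [← he]; linarith
    · linarith [h x hxX hlt]

lemma mono_case (r : ℝ) (hr : 0 ≤ r) (X : Set ℝ) (f : ℝ → ℝ)
    (hf : StrictMonoOn f X) (hg : GapsLT r (f '' X)) :
    RContinuousInside r f X := by
  intro p hp ε hε
  obtain ⟨δ₁, hδ₁, H₁⟩ := right_side r ε hr hε X f hf hg p hp
  -- left side via reflection
  set g : ℝ → ℝ := fun y => -f (-y) with hgdef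
  set X' : Set ℝ := (fun y => -y) '' X with hX'def
  have hf' : StrictMonoOn g X' := by
    rintro a ⟨x, hx, rfl⟩ b ⟨y, hy, rfl⟩ hab
    have hab' : -x < -y := hab
    have hyx : y < x := by linarith
    have := hf hy hx hyx
    simp only [hgdef, neg_neg]
    linarith
  have himg : g '' X' = (fun y => -y) '' (f '' X) := by
    rw [hX'def, Set.image_image, Set.image_image]
    ext z
    constructor
    · rintro ⟨x, hx, rfl⟩; exact ⟨x, hx, by simp [hgdef]⟩
    · rintro ⟨x, hx, rfl⟩; exact ⟨x, hx, by simp [hgdef]⟩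
  have hg' : GapsLT r (g '' X') := by
    rw [himg]; exact gapsLT_neg hg
  obtain ⟨δ₂, hδ₂, H₂⟩ := right_side r ε hr hε X' g hf' hg' (-p) ⟨p, hp, rfl⟩
  refine ⟨min δ₁ δ₂, lt_min hδ₁ hδ₂, ?_⟩
  intro x hxX hdist
  rcases le_or_gt p x with hle | hlt
  · have habs : |x - p| = x - p := abs_of_nonneg (by linarith)
    have h1 : f x - f p < r + ε := by
      apply H₁ x hxX hle
      have := lt_min_iff.mp (habs ▸ hdist)
      linarith [this.1]
    have h2 : f p ≤ f x := by
      rcases eq_or_lt_of_le hle with he | hlt'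
      · rw [he]
      · exact le_of_lt (hf hp hxX hlt')
    rw [abs_of_nonneg (by linarith)]
    exact h1
  · have habs : |x - p| = p - x := by rw [abs_of_neg (by linarith)]; ring
    have key : g (-x) - g (-p) < r + ε := by
      apply H₂ (-x) ⟨x, hxX, rfl⟩ (by linarith)
      have := lt_min_iff.mp (habs ▸ hdist)
      linarith [this.2]
    have hfx : f x < f p := hf hxX hp hlt
    simp only [hgdef, neg_neg] at key
    rw [abs_of_neg (by linarith)]
    linarith

/-- If every gap of `X` has length less than `q` and every gap of `f(X)` has
length less than `r`, with `f` strictly monotone on `X`, then `f` is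
`r`-continuous inside `X`. -/
theorem rContinuous_of_gaps_lt_discrete (q r : ℝ) (hq : 0 ≤ q) (hr : 0 ≤ r)
    (X : Set ℝ) (f : ℝ → ℝ)
    (hmono : StrictMonoOn f X ∨ StrictAntiOn f X)
    (hgapsX : GapsLT q X) (hgapsfX : GapsLT r (f '' X)) :
    RContinuousInside r f X := by
  rcases hmono with hmono | hanti
  · exact mono_case r hr X f hmono hgapsfX
  · have hmono' : StrictMonoOn (fun x => -f x) X := by
      intro a ha b hb hab
      have := hanti ha hb hab
      simpa using this
    have hg' : GapsLT r ((fun x => -f x) '' X) := by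
      have : (fun x => -f x) '' X = (fun y => -y) '' (f '' X) := by
        rw [Set.image_image]
      rw [this]
      exact gapsLT_neg hgapsfX
    have H := mono_case r hr X (fun x => -f x) hmono' hg'
    intro p hp ε hε
    obtain ⟨δ, hδ, hH⟩ := H p hp ε hε
    refine ⟨δ, hδ, ?_⟩
    intro x hx hdist
    have := hH x hx hdist
    simp only [neg_sub_neg] at this
    rwa [abs_sub_comm]
end
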